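/- If x* solves min ‖x‖₀ subject to y = Ax and some x₀ with y = Ax₀ satisfies ‖x₀‖₀ < spark(A)/2, then x* = x₀. -/

import Mathlib

/-- Number of nonzero entries of a vector (the ℓ⁰ "norm"). -/
noncomputable def sparsity {n : ℕ} (x : Fin n → ℝ) : ℕ :=
  (Finset.univ.filter fun i => x i ≠ 0).card

/-- The spark of a matrix: the minimal number of nonzero entries of a
nonzero kernel vector. -/
noncomputable def spark {m n : ℕ} (A : Matrix (Fin m) (Fin n) ℝ) : ℕ :=
  sInf {k | ∃ v : Fin n → ℝ, v ≠ 0 ∧ A.mulVec v = 0 ∧ sparsity v = k}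

/-!
If `x⋆ ≠ x₀` were both solutions of `A x = y`, their difference would be a nonzero kernel vector
with at most `‖x⋆‖₀ + ‖x₀‖₀ ≤ 2 ‖x₀‖₀ < spark A` nonzero entries (the first inequality by
optimality of `x⋆`), contradicting the definition of the spark.
-/

lemma sparsity_sub_le {n : ℕ} (x y : Fin n → ℝ) :
    sparsity (x - y) ≤ sparsity x + sparsity y := by
  refine (Finset.card_le_card fun i hi => ?_).trans (Finset.card_union_le _ _)
  simp only [Finset.mem_filter, Finset.mem_union, Finset.mem_univ, true_and, Pi.sub_apply] at hi ⊢
  by_contra! h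
  simp [h.1, h.2] at hi

lemma spark_le_sparsity {m n : ℕ} {A : Matrix (Fin m) (Fin n) ℝ} {v : Fin n → ℝ}
    (hv : v ≠ 0) (hAv : A.mulVec v = 0) : spark A ≤ sparsity v :=
  Nat.sInf_le ⟨v, hv, hAv, rfl⟩

theorem stmt_5 {m n : ℕ} (A : Matrix (Fin m) (Fin n) ℝ) (y : Fin m → ℝ)
    (xstar x0 : Fin n → ℝ)
    (hfeas : A.mulVec xstar = y)
    (hopt : ∀ z : Fin n → ℝ, A.mulVec z = y → sparsity xstar ≤ sparsity z)
    (hx0 : A.mulVec x0 = y)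
    (hs : (sparsity x0 : ℝ) < (spark A : ℝ) / 2) :
    xstar = x0 := by
  by_contra hne
  have hker : A.mulVec (xstar - x0) = 0 := by
    rw [Matrix.mulVec_sub, hfeas, hx0, sub_self]
  have hspark : spark A ≤ 2 * sparsity x0 :=
    calc spark A ≤ sparsity (xstar - x0) := spark_le_sparsity (sub_ne_zero_of_ne hne) hker
      _ ≤ sparsity xstar + sparsity x0 := sparsity_sub_le _ _
      _ ≤ 2 * sparsity x0 := by linarith [hopt x0 hx0]
  have : (spark A : ℝ) ≤ 2 * sparsity x0 := by exact_mod_cast hspark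
  linarith
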